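/- arXiv:1504.08033 — 2 statements merged into one kernel-verified Lean document; each statement's English description precedes it below -/
import Mathlib

section
/- Let S be a transition system with states S and transition relation ⇒, let B be an equivalence relation on S, and suppose there is a function erankt : S → W into a well-founded order (W, <) such that for all s, u, w with s B w and s ⇒ u, either (i) there exists v with w ⇒ v and u B v, or (ii) u B w and erankt(u) < erankt(s). Then for any s B w: if there is an infinite ⇒-path from s, then there is an infinite ⇒-path from w whose states are all B-related to states on the path from s. (I.e., a well-founded equivalence bisimulation implies stuttering trace correspondence.) -/
/-- A well-founded equivalence bisimulation (WEB) with left stuttering implies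
stuttering trace correspondence: an infinite path from `s` yields an infinite
path from any `B`-related `w` whose states are all `B`-related to states on the
path from `s`. -/
theorem stmt10 {S W : Type*} (step : S → S → Prop) (B : S → S → Prop)
    (hequiv : Equivalence B) (lt : W → W → Prop) (hwf : WellFounded lt)
    (erankt : S → W)
    (hweb : ∀ s u w, B s w → step s u →
      (∃ v, step w v ∧ B u v) ∨ (B u w ∧ lt (erankt u) (erankt s)))
    (s w : S) (hB : B s w)
    (p : ℕ → S) (hp0 : p 0 = s) (hps : ∀ i, step (p i) (p (i + 1))) :
    ∃ q : ℕ → S, q 0 = w ∧ (∀ i, step (q i) (q (i + 1))) ∧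
      ∀ i, ∃ j, B (p j) (q i) := by
  have key : ∀ x : W, ∀ j w', erankt (p j) = x → B (p j) w' →
      ∃ v, step w' v ∧ ∃ j', B (p j') v := by
    intro x
    induction x using hwf.induction with
    | _ x ih =>
      intro j w' hx hBw
      rcases hweb (p j) (p (j + 1)) w' hBw (hps j) with ⟨v, hv, hBv⟩ | ⟨hBw', hlt⟩
      · exact ⟨v, hv, j + 1, hBv⟩
      · exact ih (erankt (p (j + 1))) (hx ▸ hlt) (j + 1) w' rfl hBw'
  have key2 : ∀ x : {x : S // ∃ j, B (p j) x},
      ∃ v, step x.1 v ∧ ∃ j, B (p j) v := by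
    rintro ⟨x, j, hj⟩
    exact key (erankt (p j)) j x rfl hj
  choose F hF1 hF2 using key2
  let G : {x : S // ∃ j, B (p j) x} → {x : S // ∃ j, B (p j) x} :=
    fun x => ⟨F x, hF2 x⟩
  let a : {x : S // ∃ j, B (p j) x} := ⟨w, 0, hp0 ▸ hB⟩
  refine ⟨fun i => (G^[i] a).1, rfl, fun i => ?_, fun i => (G^[i] a).2⟩
  show step (G^[i] a).1 (G^[i+1] a).1
  rw [Function.iterate_succ_apply']
  exact hF1 (G^[i] a)
end

section
/- With stores σ : Addr → 𝒫(V) (total, pointwise ordered by inclusion) and replayΔ defined to apply a change log entry (a, vs) by setting σ(a) := σ(a) ∪ vs while recording a boolean flag that is true iff σ(a) ∪ vs ≠ σ(a) at the time of the update, the following holds: for any change log ξ and store σ, if (σ', b) = replayΔ(ξ, σ, false), then σ' = replay(ξ, σ) and (b = true ↔ σ' ≠ σ). -/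
/-- Replay a change log over a store (entries applied from the end of the list). -/
def replay {Addr V : Type*} [DecidableEq Addr] :
    List (Addr × Set V) → (Addr → Set V) → (Addr → Set V)
  | [], σ => σ
  | e :: rest, σ =>
      let σ' := replay rest σ
      Function.update σ' e.1 (σ' e.1 ∪ e.2)

/-- Replay with a change flag: the flag records whether any individual union
strictly enlarged the store at its address. -/
def replayD {Addr V : Type*} [DecidableEq Addr] :
    List (Addr × Set V) → (Addr → Set V) → Prop → ((Addr → Set V) × Prop)
  | [], σ, b => (σ, b)
  | e :: rest, σ, b =>
      let r := replayD rest σ b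
      (Function.update r.1 e.1 (r.1 e.1 ∪ e.2), r.2 ∨ ¬ e.2 ⊆ r.1 e.1)

lemma replayD_fst {Addr V : Type*} [DecidableEq Addr]
    (ξ : List (Addr × Set V)) (σ : Addr → Set V) (b : Prop) :
    (replayD ξ σ b).1 = replay ξ σ := by
  induction ξ with
  | nil => rfl
  | cons e rest ih => simp [replay, replayD, ih]

lemma replay_mono {Addr V : Type*} [DecidableEq Addr]
    (ξ : List (Addr × Set V)) (σ : Addr → Set V) (a : Addr) :
    σ a ⊆ replay ξ σ a := by
  induction ξ with
  | nil => exact subset_rfl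
  | cons e rest ih =>
      simp only [replay, Function.update]
      split
      · rename_i h; subst h; exact ih.trans Set.subset_union_left
      · exact ih

/-- `⊿?` means change: the flagged replay computes `replay`, and the flag is
true iff the resulting store differs from the input store. -/
theorem stmt12 {Addr V : Type*} [DecidableEq Addr]
    (ξ : List (Addr × Set V)) (σ : Addr → Set V) :
    (replayD ξ σ False).1 = replay ξ σ ∧
    ((replayD ξ σ False).2 ↔ (replayD ξ σ False).1 ≠ σ) := by
  refine ⟨replayD_fst _ _ _, ?_⟩
  induction ξ with
  | nil => simp [replayD]
  | cons e rest ih =>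
      simp only [replayD, replayD_fst] at ih ⊢
      constructor
      · rintro (h | h)
        · intro heq
          have hne := ih.mp h
          obtain ⟨a, ha⟩ := Function.ne_iff.mp hne
          apply Function.ne_iff.mpr ⟨a, ?_⟩ heq
          intro h2
          apply ha
          apply subset_antisymm ?_ (replay_mono _ _ _)
          by_cases hae : a = e.1
          · subst hae
            rw [Function.update_self] at h2
            exact Set.subset_union_left.trans h2.le
          · rw [Function.update_of_ne hae] at h2
            exact h2.le
        · -- ¬ e.2 ⊆ replay rest σ e.1
          intro heq
          apply h
          have h2 : Function.update (replay rest σ) e.1 (replay rest σ e.1 ∪ e.2) e.1 = σ e.1 :=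
            congrFun heq e.1
          rw [Function.update_self] at h2
          exact Set.subset_union_right.trans (h2.le.trans (replay_mono _ _ _))
      · intro hne
        by_contra hcon
        push_neg at hcon
        obtain ⟨h1, h2⟩ := hcon
        have hr : replay rest σ = σ := by
          by_contra hr; exact h1 (ih.mpr hr)
        apply hne
        rw [Set.union_eq_self_of_subset_right h2, Function.update_eq_self, hr]
end
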